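/- Let K > 0 and x > 0 be reals with exp(x²) ≥ K + 1, and define erf(x) := (2/√π)·∫₀^x e^{−t²} dt. Then (K/2)·(1 − erf(x))/erf(x) ≤ 1/2. In particular, for reals Y, θ, S, ε > 0, if x := √(ln(Y·θ·S/ε + 1)), then (Y·θ·S/2)·(1/erf(x))·(1 − erf(x)) ≤ ε/2. -/

import Mathlib

/-- The error function `erf(x) = (2/√π)·∫₀^x e^{-u²} du`. -/
noncomputable def erf (x : ℝ) : ℝ := (2 / Real.sqrt Real.pi) * ∫ u in (0:ℝ)..x, Real.exp (-u ^ 2)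

/-!
Writing `erf x = 1 - (2/√π) ∫_x^∞ e^{-t²} dt` and using `t² ≥ x² + (t - x)²` for `t ≥ x ≥ 0`,
the Gaussian tail is at most `e^{-x²}` times the half-Gaussian integral `√π/2`, so
`1 - erf x ≤ e^{-x²} ≤ 1/(K+1)`; hence `K (1 - erf x) ≤ K/(K+1) ≤ 1 - e^{-x²} ≤ erf x`.
The choice `x = √(ln(YθS/ε + 1))` is exactly `e^{x²} = K + 1` with `K = YθS/ε`.
-/

open MeasureTheory Set Real

theorem setIntegral_Ioi_comp_sub {E : Type*} [NormedAddCommGroup E] [NormedSpace ℝ E]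
    (f : ℝ → E) (a d : ℝ) : ∫ t in Ioi (a + d), f (t - d) = ∫ s in Ioi a, f s := by
  rw [← image_add_const_Ioi, (measurePreserving_add_right volume d).setIntegral_image_emb
    (measurableEmbedding_addRight d)]
  simp only [add_sub_cancel_right]

lemma integrable_exp_neg_sq : Integrable (fun t : ℝ => exp (-t ^ 2)) := by
  simpa using integrable_exp_neg_mul_sq one_pos

lemma integral_exp_neg_sq_Ioi_zero : ∫ t in Ioi (0:ℝ), exp (-t ^ 2) = √π / 2 := by
  simpa using integral_gaussian_Ioi 1

theorem erf_eq_one_sub_integral_Ioi (x : ℝ) :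
    erf x = 1 - 2 / √π * ∫ t in Ioi x, exp (-t ^ 2) := by
  have hπ : 0 < √π := sqrt_pos.2 pi_pos
  rw [erf, ← intervalIntegral.integral_Ioi_sub_Ioi' integrable_exp_neg_sq.integrableOn
    integrable_exp_neg_sq.integrableOn, integral_exp_neg_sq_Ioi_zero]
  field_simp

theorem integral_exp_neg_sq_Ioi_le {x : ℝ} (hx : 0 ≤ x) :
    ∫ t in Ioi x, exp (-t ^ 2) ≤ exp (-x ^ 2) * (√π / 2) := calc
  ∫ t in Ioi x, exp (-t ^ 2) ≤ ∫ t in Ioi x, exp (-x ^ 2) * exp (-(t - x) ^ 2) := by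
    refine setIntegral_mono_on integrable_exp_neg_sq.integrableOn
      ((integrable_exp_neg_sq.comp_sub_right x).const_mul _).integrableOn measurableSet_Ioi
      fun t ht => ?_
    rw [← exp_add, exp_le_exp]
    nlinarith [mem_Ioi.1 ht]
  _ = exp (-x ^ 2) * (√π / 2) := by
    rw [integral_const_mul, ← integral_exp_neg_sq_Ioi_zero]
    simpa using setIntegral_Ioi_comp_sub (fun s => exp (-s ^ 2)) 0 x

theorem one_sub_exp_neg_sq_le_erf {x : ℝ} (hx : 0 ≤ x) : 1 - exp (-x ^ 2) ≤ erf x := by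
  have hπ : 0 < √π := sqrt_pos.2 pi_pos
  have htail := integral_exp_neg_sq_Ioi_le hx
  rw [erf_eq_one_sub_integral_Ioi, sub_le_sub_iff_left, div_mul_eq_mul_div, div_le_iff₀ hπ]
  linarith

theorem erf_pos {x : ℝ} (hx : 0 < x) : 0 < erf x :=
  (sub_pos.2 (exp_lt_one_iff.2 (by nlinarith))).trans_le (one_sub_exp_neg_sq_le_erf hx.le)

theorem div_two_mul_one_sub_erf_div_erf_le_half {K x : ℝ} (hK : 0 ≤ K) (hx : 0 < x)
    (h : K + 1 ≤ exp (x ^ 2)) : K / 2 * (1 - erf x) / erf x ≤ 1 / 2 := by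
  have hexp : (K + 1) * exp (-x ^ 2) ≤ 1 := by
    rwa [exp_neg, ← div_eq_mul_inv, div_le_one (exp_pos _)]
  have herf := one_sub_exp_neg_sq_le_erf hx.le
  rw [div_le_div_iff₀ (erf_pos hx) two_pos]
  nlinarith

/-- If `e^{x²} ≥ K + 1` then `(K/2)·(1 − erf x)/erf x ≤ 1/2`; in particular,
for `Y, θ, S, ε > 0` and `x = √(ln(YθS/ε + 1))`, the area error
`E_Area = (YθS/2)·(1/erf x)·(1 − erf x)` is at most `ε/2`. -/
theorem area_error_small :
    (∀ K x : ℝ, 0 < K → 0 < x → K + 1 ≤ Real.exp (x ^ 2) →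
      K / 2 * (1 - erf x) / erf x ≤ 1 / 2) ∧
    (∀ Y θ S ε : ℝ, 0 < Y → 0 < θ → 0 < S → 0 < ε →
      Y * θ * S / 2 * (1 / erf (Real.sqrt (Real.log (Y * θ * S / ε + 1)))) *
          (1 - erf (Real.sqrt (Real.log (Y * θ * S / ε + 1)))) ≤ ε / 2) := by
  refine ⟨fun K x hK hx h => div_two_mul_one_sub_erf_div_erf_le_half hK.le hx h,
    fun Y θ S ε hY hθ hS hε => ?_⟩
  set K := Y * θ * S / ε
  have hK : 0 < K := by positivity
  have hlog : 0 < log (K + 1) := log_pos (by linarith)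
  set x := √(log (K + 1))
  have hexp : K + 1 ≤ exp (x ^ 2) := by
    rw [sq_sqrt hlog.le, exp_log (by linarith)]
  calc Y * θ * S / 2 * (1 / erf x) * (1 - erf x) = ε * (K / 2 * (1 - erf x) / erf x) := by
        simp only [K]; field_simp
    _ ≤ ε * (1 / 2) := mul_le_mul_of_nonneg_left
        (div_two_mul_one_sub_erf_div_erf_le_half hK.le (sqrt_pos.2 hlog) hexp) hε.le
    _ = ε / 2 := by ring
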